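/- arXiv:2007.09787 — 3 statements merged into one kernel-verified Lean document; each statement's English description precedes it below -/
import Mathlib

section
/- Let q be a prime power, n ≥ 3, m₁, m₂ positive integers and f ∈ Υ_{qⁿ}(m₁,m₂). Let ℓ be a divisor of qⁿ−1 and let {p₁,…,p_r} be the set of all primes dividing qⁿ−1 but not dividing ℓ. Let g ∈ F_q[x] be a divisor of xⁿ−1 and let {P₁,…,P_s} ⊂ F_q[x] be the set of all monic irreducible polynomials dividing xⁿ−1 but not dividing g. Then N_f(qⁿ−1, qⁿ−1, xⁿ−1) ≥ Σ_{i=1}^{r} N_f(p_i ℓ, ℓ, g) + Σ_{i=1}^{r} N_f(ℓ, p_i ℓ, g) + Σ_{i=1}^{s} N_f(ℓ, ℓ, P_i g) − (2r + s − 1) · N_f(ℓ, ℓ, g). -/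
open Polynomial

noncomputable section

/-- An element of a finite field is *primitive* if it generates the multiplicative group. -/
def IsPrimitiveElem {L : Type} [Field L] [Fintype L] (α : L) : Prop :=
  orderOf α = Fintype.card L - 1

/-- `β` is a *normal element* of `L` over `K`, where `n = [L : K]`:
the conjugates `β, β^q, …, β^(q^(n-1))` form a `K`-basis of `L`. -/
def IsNormalElem (K : Type) {L : Type} [Field K] [Fintype K] [Field L] [Algebra K L]
    (n : ℕ) (β : L) : Prop :=
  LinearIndependent K (fun i : Fin n => β ^ Fintype.card K ^ (i : ℕ)) ∧
    Submodule.span K (Set.range fun i : Fin n => β ^ Fintype.card K ^ (i : ℕ)) = ⊤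

/-- The set `Υ_Q(m₁, m₂)` of rational functions over the field `F` with `Q` elements. -/
def Upsilon (F : Type) [Field F] [Fintype F] (m₁ m₂ : ℕ) : Set (RatFunc F) :=
  {f | ∃ f₁ f₂ : F[X], f₂ ≠ 0 ∧
      f = algebraMap F[X] (RatFunc F) f₁ / algebraMap F[X] (RatFunc F) f₂ ∧
      f₁.natDegree ≤ m₁ ∧ f₂.natDegree ≤ m₂ ∧ IsCoprime f₁ f₂ ∧
      ∃ (k : ℕ) (g : F[X]), 0 < k ∧ g.Monic ∧ Irreducible g ∧ g ≠ X ∧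
        Nat.gcd k (Fintype.card F - 1) = 1 ∧
        g ^ k ∣ f₁ * f₂ ∧ ¬ g ^ (k + 1) ∣ f₁ * f₂}

/-- Evaluation of a rational function at a point of the same field (`0` if undefined). -/
def ratEval {F : Type} [Field F] (f : RatFunc F) (α : F) : F :=
  f.eval (RingHom.id F) α

/-- `α` is `s`-free. -/
def IsFree {F : Type} [Field F] (s : ℕ) (α : F) : Prop :=
  α ≠ 0 ∧ ∀ d : ℕ, d ∣ s → d ≠ 1 → ¬ ∃ β : F, β ^ d = α

/-- The `F_q[x]`-module action `h ∘ β = ∑ hᵢ β^(qⁱ)` on `L`. -/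
def polyAct {K L : Type} [Field K] [Fintype K] [Field L] [Algebra K L]
    (h : K[X]) (β : L) : L :=
  h.sum fun i a => algebraMap K L a * β ^ Fintype.card K ^ i

/-- `α` is `g`-free with respect to the `F_q[x]`-module structure of `L`. -/
def IsPolyFree (K : Type) {L : Type} [Field K] [Fintype K] [Field L] [Algebra K L]
    (g : K[X]) (α : L) : Prop :=
  ∀ h : K[X], h.Monic → h ∣ g → (∃ lam : L, α = polyAct h lam) → h = 1

/-- `N_f(e₁, e₂, g)`: the number of `α ∈ L` such that `α` is `e₁`-free,
`f(α)` is `e₂`-free and `α` is `g`-free. -/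
def NElems (K : Type) {L : Type} [Field K] [Fintype K] [Field L] [Fintype L] [Algebra K L]
    (f : RatFunc L) (e₁ e₂ : ℕ) (g : K[X]) : ℕ :=
  Nat.card {α : L | IsFree e₁ α ∧ IsFree e₂ (ratEval f α) ∧ IsPolyFree K g α}

/-- `W(ℓ)`: the number of squarefree divisors of `ℓ`. -/
def Wnat (ℓ : ℕ) : ℕ := (ℓ.divisors.filter Squarefree).card

/-- `W_q(g)`: the number of monic squarefree divisors of `g` in `F_q[x]`. -/
def Wpoly {K : Type} [Field K] (g : K[X]) : ℕ :=
  Nat.card {h : K[X] // h.Monic ∧ Squarefree h ∧ h ∣ g}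

/-- `Φ(g) = |(F_q[x]/(g))ˣ|`. -/
def PhiPoly {K : Type} [Field K] (g : K[X]) : ℕ :=
  Nat.card ((K[X] ⧸ Ideal.span ({g} : Set K[X]))ˣ)

/-- `(q, n) ∈ B(m₁, m₂)`: for every `f ∈ Υ_{qⁿ}(m₁, m₂)` there is a primitive element
`α` of `F_{qⁿ}`, normal over `F_q`, with `f(α)` also primitive. -/
def memB (m₁ m₂ q n : ℕ) : Prop :=
  ∀ (K L : Type) [Field K] [Field L] [Fintype K] [Fintype L] [Algebra K L],
    Fintype.card K = q → Fintype.card L = q ^ n →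
    ∀ f ∈ Upsilon L m₁ m₂,
      ∃ α : L, IsPrimitiveElem α ∧ IsNormalElem K n α ∧ IsPrimitiveElem (ratEval f α)

/-- `𝔑(q, n)`: the number of primitive elements of `F_{qⁿ}` that are normal over `F_q`. -/
def NNum (K L : Type) [Field K] [Fintype K] [Field L] [Fintype L] [Algebra K L] (n : ℕ) : ℕ :=
  Nat.card {α : L | IsPrimitiveElem α ∧ IsNormalElem K n α}

end

/-! The target set is the set of `(ℓ, ℓ, g)`-free elements cut down by finitely many extra
conditions: `p`-freeness of `α` or of `f(α)` for each prime `p ∣ qⁿ - 1` with `p ∤ ℓ`, and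
`P`-freeness of `α` for each monic irreducible `P ∣ xⁿ - 1` with `P ∤ g`; being `m`-free only
depends on the primes dividing `m`, and `G`-free only on the irreducible factors of `G`. The
`(ℓ, ℓ, g)`-free elements outside the target set thus lie in the union of the complements of the
`2r + s` sets counted on the right, and the union bound gives the inequality. -/

open Finset in
theorem sum_card_subtype_le_card_subtype_forall_add {α ι : Type*} [Finite α] (P₀ : α → Prop)
    (P : ι → α → Prop) (I : Finset ι) (hP : ∀ i ∈ I, ∀ x, P i x → P₀ x) :
    ∑ i ∈ I, (Nat.card {x // P i x} : ℤ) ≤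
      Nat.card {x // P₀ x ∧ ∀ i ∈ I, P i x} + (#I - 1) * Nat.card {x // P₀ x} := by
  classical
  have := Fintype.ofFinite α
  simp only [Nat.card_eq_fintype_card, Fintype.card_subtype]
  set s := univ.filter P₀
  set t := fun i => univ.filter (P i)
  set T := univ.filter fun x => P₀ x ∧ ∀ i ∈ I, P i x
  have hts : ∀ i ∈ I, t i ⊆ s := fun i hi x => by simpa [t, s] using hP i hi x
  have hTs : T ⊆ s := fun x => by simp +contextual [T, s]
  have hcover : s \ T ⊆ I.biUnion fun i => s \ t i := fun x => by
    simp +contextual [s, t, T]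
  have hmissed : #(s \ T) ≤ ∑ i ∈ I, #(s \ t i) := (card_le_card hcover).trans card_biUnion_le
  have hsum : ∑ i ∈ I, (#(t i) : ℤ) = #I * #s - ∑ i ∈ I, (#(s \ t i) : ℤ) := by
    rw [eq_sub_iff_add_eq, ← sum_add_distrib, sum_congr rfl fun i hi => ?_, sum_const,
      nsmul_eq_mul]
    have := card_sdiff_add_card_eq_card (hts i hi)
    push_cast [← this]
    ring
  have hT : (#(s \ T) : ℤ) + #T = #s := by exact_mod_cast card_sdiff_add_card_eq_card hTs
  zify at hmissed
  linarith

section Free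

variable {F : Type} [Field F]

theorem isFree_iff_forall_prime {s : ℕ} {α : F} :
    IsFree s α ↔ α ≠ 0 ∧ ∀ p : ℕ, p.Prime → p ∣ s → ∀ β : F, β ^ p ≠ α := by
  refine ⟨fun h => ⟨h.1, fun p hp hps β hβ => h.2 p hps hp.ne_one ⟨β, hβ⟩⟩,
    fun ⟨h0, h⟩ => ⟨h0, fun d hds hd1 ⟨β, hβ⟩ => ?_⟩⟩
  obtain ⟨p, hp, hpd⟩ := Nat.exists_prime_and_dvd hd1
  obtain ⟨e, rfl⟩ := hpd
  exact h p hp (dvd_of_mul_right_dvd hds) (β ^ e) (by rw [← pow_mul, mul_comm, hβ])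

theorem IsFree.of_dvd {s t : ℕ} {α : F} (ht : IsFree t α) (h : s ∣ t) : IsFree s α :=
  ⟨ht.1, fun d hd hd1 => ht.2 d (hd.trans h) hd1⟩

theorem isFree_iff_isFree_prime_mul {ℓ m : ℕ} (hℓ : ℓ ∣ m) {α : F} :
    IsFree m α ↔ IsFree ℓ α ∧ ∀ p : ℕ, p.Prime → p ∣ m → ¬ p ∣ ℓ → IsFree (p * ℓ) α := by
  refine ⟨fun h => ⟨h.of_dvd hℓ, fun p hp hpm hpℓ =>
    h.of_dvd ((hp.coprime_iff_not_dvd.mpr hpℓ).mul_dvd_of_dvd_of_dvd hpm hℓ)⟩,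
    fun ⟨hfree, hprime⟩ => ?_⟩
  refine isFree_iff_forall_prime.mpr ⟨hfree.1, fun p hp hpm => ?_⟩
  by_cases hpℓ : p ∣ ℓ
  · exact (isFree_iff_forall_prime.mp hfree).2 p hp hpℓ
  · exact (isFree_iff_forall_prime.mp (hprime p hp hpm hpℓ)).2 p hp (dvd_mul_right p ℓ)

end Free

section PolyFree

variable {K L : Type} [Field K] [Fintype K] [Field L] [Algebra K L]

theorem polyAct_eq_aeval_frobenius (h : K[X]) (β : L) :
    polyAct h β = aeval (FiniteField.frobeniusAlgHom K L).toLinearMap h β := by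
  rw [aeval_def, eval₂_eq_sum, polyAct, Polynomial.sum, Polynomial.sum]
  simp only [LinearMap.coe_sum, Finset.sum_apply, Module.End.mul_apply,
    Module.algebraMap_end_apply, Algebra.smul_def]
  congr! 3 with i
  rw [Module.End.pow_apply, AlgHom.coe_toLinearMap, FiniteField.coe_frobeniusAlgHom,
    pow_iterate]

theorem polyAct_mul (a b : K[X]) (β : L) : polyAct (a * b) β = polyAct a (polyAct b β) := by
  simp only [polyAct_eq_aeval_frobenius, map_mul, Module.End.mul_apply]

theorem isPolyFree_iff_forall_irreducible {g : K[X]} {α : L} :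
    IsPolyFree K g α ↔
      ∀ P : K[X], P.Monic → Irreducible P → P ∣ g → ∀ lam : L, α ≠ polyAct P lam := by
  refine ⟨fun h P hPm hP hPg lam hα => hP.not_isUnit (h P hPm hPg ⟨lam, hα⟩ ▸ isUnit_one),
    fun h d hdm hdg ⟨lam, hα⟩ => by_contra fun hd1 => ?_⟩
  obtain ⟨P, hPm, hP, c, rfl⟩ :=
    exists_monic_irreducible_factor d fun hu => hd1 (hdm.eq_one_of_isUnit hu)
  exact h P hPm hP (dvd_of_mul_right_dvd hdg) (polyAct c lam) (by rw [hα, polyAct_mul])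

theorem IsPolyFree.of_dvd {g G : K[X]} {α : L} (hG : IsPolyFree K G α) (h : g ∣ G) :
    IsPolyFree K g α :=
  fun d hdm hdg hα => hG d hdm (hdg.trans h) hα

theorem isPolyFree_iff_isPolyFree_irreducible_mul {g G : K[X]} (hg : g ∣ G) {α : L} :
    IsPolyFree K G α ↔ IsPolyFree K g α ∧
      ∀ P : K[X], P.Monic → Irreducible P → P ∣ G → ¬ P ∣ g → IsPolyFree K (P * g) α := by
  refine ⟨fun h => ⟨h.of_dvd hg, fun P _ hP hPG hPg =>
    h.of_dvd ((hP.coprime_iff_not_dvd.mpr hPg).mul_dvd hPG hg)⟩,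
    fun ⟨hfree, hirr⟩ => ?_⟩
  refine isPolyFree_iff_forall_irreducible.mpr fun P hPm hP hPG => ?_
  by_cases hPg : P ∣ g
  · exact isPolyFree_iff_forall_irreducible.mp hfree P hPm hP hPg
  · exact isPolyFree_iff_forall_irreducible.mp (hirr P hPm hP hPG hPg) P hPm hP
      (dvd_mul_right P g)

end PolyFree

theorem stmt2_general (q n : ℕ)
    (K L : Type) [Field K] [Field L] [Fintype K] [Fintype L] [Algebra K L]
    (f : RatFunc L)
    (ℓ : ℕ) (hℓ : ℓ ∣ q ^ n - 1)
    (R : Finset ℕ) (hR : ∀ p : ℕ, p ∈ R ↔ p.Prime ∧ p ∣ q ^ n - 1 ∧ ¬ p ∣ ℓ)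
    (g : Polynomial K) (hgdvd : g ∣ X ^ n - 1)
    (S : Finset (Polynomial K))
    (hS : ∀ P : Polynomial K, P ∈ S ↔ P.Monic ∧ Irreducible P ∧ P ∣ X ^ n - 1 ∧ ¬ P ∣ g) :
    (NElems K f (q ^ n - 1) (q ^ n - 1) ((X : Polynomial K) ^ n - 1) : ℝ) ≥
      (∑ p ∈ R, (NElems K f (p * ℓ) ℓ g : ℝ)) +
      (∑ p ∈ R, (NElems K f ℓ (p * ℓ) g : ℝ)) +
      (∑ P ∈ S, (NElems K f ℓ ℓ (P * g) : ℝ)) -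
      (2 * (R.card : ℝ) + S.card - 1) * NElems K f ℓ ℓ g := by
  set Free : ℕ → ℕ → K[X] → L → Prop := fun e₁ e₂ G α =>
    IsFree e₁ α ∧ IsFree e₂ (ratEval f α) ∧ IsPolyFree K G α
  set I := R.disjSum (R.disjSum S)
  set C : ℕ ⊕ ℕ ⊕ K[X] → L → Prop := Sum.elim (fun p => Free (p * ℓ) ℓ g)
    (Sum.elim (fun p => Free ℓ (p * ℓ) g) (fun Q => Free ℓ ℓ (Q * g)))
  have hC : ∀ i ∈ I, ∀ α, C i α → Free ℓ ℓ g α := by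
    rintro (p | p | Q) - α ⟨h₁, h₂, h₃⟩
    · exact ⟨h₁.of_dvd (dvd_mul_left ℓ p), h₂, h₃⟩
    · exact ⟨h₁, h₂.of_dvd (dvd_mul_left ℓ p), h₃⟩
    · exact ⟨h₁, h₂, h₃.of_dvd (dvd_mul_left g Q)⟩
  have hsieve : ∀ α, Free (q ^ n - 1) (q ^ n - 1) (X ^ n - 1) α ↔
      Free ℓ ℓ g α ∧ ∀ i ∈ I, C i α := by
    intro α
    simp only [Free, I, C, Sum.forall, Finset.inl_mem_disjSum, Finset.inr_mem_disjSum,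
      Sum.elim_inl, Sum.elim_inr, hR, hS, and_imp, isFree_iff_isFree_prime_mul hℓ,
      isPolyFree_iff_isPolyFree_irreducible_mul hgdvd]
    grind
  have hunion := sum_card_subtype_le_card_subtype_forall_add _ C I hC
  rw [← Nat.card_congr (Equiv.subtypeEquivRight hsieve)] at hunion
  have hN : ∀ e₁ e₂ G, Nat.card {α // Free e₁ e₂ G α} = NElems K f e₁ e₂ G := fun _ _ _ => rfl
  have hunionℝ := (Int.cast_le (R := ℝ)).mpr hunion
  simp only [I, C, Finset.sum_disjSum, Finset.card_disjSum, Sum.elim_inl, Sum.elim_inr, hN]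
    at hunionℝ
  push_cast at hunionℝ
  linarith

theorem stmt2 (q n m₁ m₂ : ℕ) (hq : IsPrimePow q) (hn : 3 ≤ n)
    (hm₁ : 0 < m₁) (hm₂ : 0 < m₂)
    (K L : Type) [Field K] [Field L] [Fintype K] [Fintype L] [Algebra K L]
    (hK : Fintype.card K = q) (hL : Fintype.card L = q ^ n)
    (f : RatFunc L) (hf : f ∈ Upsilon L m₁ m₂)
    (ℓ : ℕ) (hℓ : ℓ ∣ q ^ n - 1)
    (R : Finset ℕ) (hR : ∀ p : ℕ, p ∈ R ↔ p.Prime ∧ p ∣ q ^ n - 1 ∧ ¬ p ∣ ℓ)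
    (g : Polynomial K) (hgdvd : g ∣ X ^ n - 1)
    (S : Finset (Polynomial K))
    (hS : ∀ P : Polynomial K, P ∈ S ↔ P.Monic ∧ Irreducible P ∧ P ∣ X ^ n - 1 ∧ ¬ P ∣ g) :
    (NElems K f (q ^ n - 1) (q ^ n - 1) ((X : Polynomial K) ^ n - 1) : ℝ) ≥
      (∑ p ∈ R, (NElems K f (p * ℓ) ℓ g : ℝ)) +
      (∑ p ∈ R, (NElems K f ℓ (p * ℓ) g : ℝ)) +
      (∑ P ∈ S, (NElems K f ℓ ℓ (P * g) : ℝ)) -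
      (2 * (R.card : ℝ) + S.card - 1) * NElems K f ℓ ℓ g :=
  stmt2_general q n K L f ℓ hℓ R hR g hgdvd S hS
end

section
/- Let q be a prime power, n ≥ 3 and m₁, m₂ positive integers. If 𝔑(q,n) ≤ m₁ + m₂ + 1, then (q,n) ∉ B(m₁,m₂). -/
open Polynomial

/-!
Elements `0` and `1` are never primitive in a field with at least three elements. Take a set `S`
of at most `m₁ + m₂ + 1` nonzero points, enlarged to at least two; fix `α₀ ∈ S` and split the
rest as `A ∪ B` with `1 ≤ |A| ≤ m₁` and `|B| ≤ m₂`. Then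
`f = c ∏_{a ∈ A} (x - a) / ∏_{b ∈ B} (x - b)` lies in `Υ` (numerator times denominator is
squarefree with a root `a ≠ 0`), vanishes on `A`, takes the junk value `0` on the poles `B`, and
`f(α₀) = 1` for a suitable `c`. Taking `S` to be the primitive normal elements, `f(α) ∈ {0, 1}`
is not primitive for any of them.
-/

open Lagrange

section Primitive

variable {F : Type} [Field F] [Fintype F]

lemma IsPrimitiveElem.ne_zero {α : F} (hα : IsPrimitiveElem α) : α ≠ 0 := by
  rintro rfl
  have h0 : orderOf (0 : F) = 0 :=
    orderOf_eq_zero_iff'.2 fun k hk => by simp [zero_pow hk.ne']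
  have := Fintype.one_lt_card (α := F)
  rw [IsPrimitiveElem, h0] at hα
  omega

lemma IsPrimitiveElem.ne_one (hF : 3 ≤ Fintype.card F) {α : F} (hα : IsPrimitiveElem α) :
    α ≠ 1 := by
  rintro rfl
  rw [IsPrimitiveElem, orderOf_one] at hα
  omega

end Primitive

section Nodal

variable {F : Type} [Field F]

lemma ratEval_div_of_isCoprime {p q : F[X]} (hq : q ≠ 0) (hpq : IsCoprime p q) (α : F) :
    ratEval (algebraMap F[X] (RatFunc F) p / algebraMap F[X] (RatFunc F) q) α
      = p.eval α / q.eval α := by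
  classical
  have hgcd : gcd p q = 1 := by
    rw [← normalize_gcd, normalize_eq_one]
    exact gcd_isUnit_iff_isRelPrime.mpr hpq.isRelPrime
  rw [ratEval, RatFunc.eval, RatFunc.num_div, RatFunc.denom_div p hq, hgcd]
  simp only [EuclideanDomain.div_one, eval₂_eq_eval_map, Polynomial.map_id, eval_mul, eval_C]
  exact mul_div_mul_left _ _ (inv_ne_zero (leadingCoeff_ne_zero.mpr hq))

lemma squarefree_nodal {ι : Type*} {s : Finset ι} {v : ι → F} (hv : Set.InjOn v s) :
    Squarefree (nodal s v) :=
  (separable_prod_X_sub_C_iff'.2 hv).squarefree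

lemma isCoprime_nodal_of_disjoint {A B : Finset F} (hAB : Disjoint A B) :
    IsCoprime (nodal A id) (nodal B id) :=
  IsCoprime.prod_left fun a ha => IsCoprime.prod_right fun b hb =>
    isCoprime_X_sub_C_of_isUnit_sub (sub_ne_zero.2 (Finset.disjoint_iff_ne.1 hAB a ha b hb)).isUnit

lemma nodal_mul_nodal_of_disjoint [DecidableEq F] {A B : Finset F} (hAB : Disjoint A B) :
    nodal A id * nodal B id = nodal (A ∪ B) id := by
  simp only [nodal_eq, Finset.prod_union hAB]

noncomputable def nodalRatio (c : F) (A B : Finset F) : RatFunc F :=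
  algebraMap F[X] (RatFunc F) (C c * nodal A id) / algebraMap F[X] (RatFunc F) (nodal B id)

variable {c : F} {A B : Finset F}

lemma ratEval_nodalRatio (hc : c ≠ 0) (hAB : Disjoint A B) (α : F) :
    ratEval (nodalRatio c A B) α = c * (nodal A id).eval α / (nodal B id).eval α := by
  rw [nodalRatio, ratEval_div_of_isCoprime nodal_ne_zero, eval_mul, eval_C]
  exact (isCoprime_mul_unit_left_left (isUnit_C.2 hc.isUnit) _ _).2
    (isCoprime_nodal_of_disjoint hAB)

lemma ratEval_nodalRatio_of_mem (hc : c ≠ 0) (hAB : Disjoint A B) {α : F}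
    (hα : α ∈ A ∨ α ∈ B) : ratEval (nodalRatio c A B) α = 0 := by
  rw [ratEval_nodalRatio hc hAB]
  rcases hα with hα | hα
  · rw [show (nodal A id).eval α = 0 from eval_nodal_at_node (v := id) hα, mul_zero, zero_div]
  · rw [show (nodal B id).eval α = 0 from eval_nodal_at_node (v := id) hα, div_zero]

lemma eval_nodal_id_ne_zero {s : Finset F} {x : F} (hx : x ∉ s) : (nodal s id).eval x ≠ 0 :=
  eval_nodal_not_at_node fun _ hi h => hx (h ▸ hi)

lemma ratEval_nodalRatio_normalized (hAB : Disjoint A B) {α₀ : F} (hα₀A : α₀ ∉ A)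
    (hα₀B : α₀ ∉ B) :
    ratEval (nodalRatio ((nodal B id).eval α₀ / (nodal A id).eval α₀) A B) α₀ = 1 := by
  have hA := eval_nodal_id_ne_zero hα₀A
  have hB := eval_nodal_id_ne_zero hα₀B
  rw [ratEval_nodalRatio (div_ne_zero hB hA) hAB, div_mul_cancel₀ _ hA, div_self hB]

/-- Numerator times denominator is squarefree, so `g = x - a` occurs with exponent `k = 1`. -/
lemma nodalRatio_mem_upsilon [Fintype F] {m₁ m₂ : ℕ} (hc : c ≠ 0) (hAB : Disjoint A B)
    (hA : A.card ≤ m₁) (hB : B.card ≤ m₂) {a : F} (ha : a ∈ A) (ha0 : a ≠ 0) :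
    nodalRatio c A B ∈ Upsilon F m₁ m₂ := by
  classical
  have hprod : C c * nodal A id * nodal B id = C c * nodal (A ∪ B) id := by
    rw [mul_assoc, nodal_mul_nodal_of_disjoint hAB]
  refine ⟨C c * nodal A id, nodal B id, nodal_ne_zero, rfl, ?_, ?_,
    (isCoprime_mul_unit_left_left (isUnit_C.2 hc.isUnit) _ _).2 (isCoprime_nodal_of_disjoint hAB),
    1, X - C a, one_pos, monic_X_sub_C a, irreducible_X_sub_C a, ?_, Nat.gcd_one_left _, ?_, ?_⟩
  · rw [natDegree_C_mul hc, natDegree_nodal]; exact hA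
  · rw [natDegree_nodal]; exact hB
  · exact fun h => ha0 (C_eq_zero.1 (sub_eq_self.1 h))
  · rw [pow_one, hprod]
    exact (X_sub_C_dvd_nodal id (Finset.mem_union_left B ha)).mul_left _
  · rw [hprod, (isUnit_C.2 hc.isUnit).dvd_mul_left, pow_two]
    exact fun h => not_isUnit_X_sub_C a (squarefree_nodal (Set.injOn_id _) _ h)

end Nodal

lemma exists_mem_upsilon_forall_ratEval_eq_zero_or_one {F : Type} [Field F] [Fintype F]
    {m₁ m₂ : ℕ} (hm₁ : 0 < m₁) (hF : 3 ≤ Fintype.card F) {S : Finset F} (hS0 : 0 ∉ S)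
    (hS : S.card ≤ m₁ + m₂ + 1) :
    ∃ f ∈ Upsilon F m₁ m₂, ∀ α ∈ S, ratEval f α = 0 ∨ ratEval f α = 1 := by
  classical
  have hS_sub : S ⊆ Finset.univ.erase 0 := fun x hx =>
    Finset.mem_erase.2 ⟨ne_of_mem_of_not_mem hx hS0, Finset.mem_univ x⟩
  have hunits : (Finset.univ.erase (0 : F)).card = Fintype.card F - 1 := by
    rw [Finset.card_erase_of_mem (Finset.mem_univ _), Finset.card_univ]
  obtain ⟨S', hSS', hS'0, hS'card⟩ := Finset.exists_subsuperset_card_eq hS_sub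
    (le_max_left S.card 2) (by have := Finset.card_le_card hS_sub; omega)
  obtain ⟨α₀, hα₀⟩ : S'.Nonempty := Finset.card_pos.1 (by omega)
  set T := S'.erase α₀
  have hT : T.card = max S.card 2 - 1 := by rw [Finset.card_erase_of_mem hα₀, hS'card]
  obtain ⟨A, hAT, hA⟩ := Finset.exists_subset_card_eq (min_le_left T.card m₁)
  obtain ⟨a, ha⟩ : A.Nonempty := Finset.card_pos.1 (by omega)
  have hα₀A : α₀ ∉ A := fun h => Finset.notMem_erase α₀ S' (hAT h)
  have hα₀B : α₀ ∉ T \ A := fun h => Finset.notMem_erase α₀ S' (Finset.sdiff_subset h)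
  have hc := div_ne_zero (eval_nodal_id_ne_zero hα₀B) (eval_nodal_id_ne_zero hα₀A)
  refine ⟨_, nodalRatio_mem_upsilon hc Finset.disjoint_sdiff (hA ▸ min_le_right _ _)
    (by rw [Finset.card_sdiff_of_subset hAT]; omega) ha
    (Finset.ne_of_mem_erase (hS'0 (Finset.mem_of_mem_erase (hAT ha)))), fun α hα => ?_⟩
  by_cases hαα₀ : α = α₀
  · subst hαα₀
    exact Or.inr (ratEval_nodalRatio_normalized Finset.disjoint_sdiff hα₀A hα₀B)
  · have hαT : α ∈ T := Finset.mem_erase.2 ⟨hαα₀, hSS' hα⟩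
    refine Or.inl (ratEval_nodalRatio_of_mem hc Finset.disjoint_sdiff ?_)
    by_cases hαA : α ∈ A
    · exact Or.inl hαA
    · exact Or.inr (Finset.mem_sdiff.2 ⟨hαT, hαA⟩)

theorem stmt16_general (q n m₁ m₂ : ℕ) (hn : 3 ≤ n)
    (hm₁ : 0 < m₁)
    (K L : Type) [Field K] [Field L] [Fintype K] [Fintype L] [Algebra K L]
    (hK : Fintype.card K = q) (hL : Fintype.card L = q ^ n)
    (h : NNum K L n ≤ m₁ + m₂ + 1) : ¬ memB m₁ m₂ q n := by
  classical
  intro hB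
  have hL3 : 3 ≤ Fintype.card L := by
    rw [hL, ← hK]
    calc 3 ≤ 2 ^ n := le_trans (by norm_num) (Nat.pow_le_pow_right two_pos hn)
      _ ≤ Fintype.card K ^ n := Nat.pow_le_pow_left Fintype.one_lt_card n
  set S := {α : L | IsPrimitiveElem α ∧ IsNormalElem K n α}.toFinset
  have hS : S.card ≤ m₁ + m₂ + 1 := by rwa [NNum, Nat.card_eq_card_toFinset] at h
  obtain ⟨f, hf, hfS⟩ := exists_mem_upsilon_forall_ratEval_eq_zero_or_one hm₁ hL3
    (fun h0 => (Set.mem_toFinset.1 h0).1.ne_zero rfl) hS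
  obtain ⟨α, hprim, hnormal, hfprim⟩ := hB K L hK hL f hf
  rcases hfS α (Set.mem_toFinset.2 ⟨hprim, hnormal⟩) with h0 | h1
  · exact hfprim.ne_zero h0
  · exact hfprim.ne_one hL3 h1

theorem stmt16 (q n m₁ m₂ : ℕ) (hq : IsPrimePow q) (hn : 3 ≤ n)
    (hm₁ : 0 < m₁) (hm₂ : 0 < m₂)
    (K L : Type) [Field K] [Field L] [Fintype K] [Fintype L] [Algebra K L]
    (hK : Fintype.card K = q) (hL : Fintype.card L = q ^ n)
    (h : NNum K L n ≤ m₁ + m₂ + 1) : ¬ memB m₁ m₂ q n :=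
  stmt16_general q n m₁ m₂ hn hm₁ K L hK hL h
end

section
/- Let q = 2^k for some positive integer k, let n ≥ 3, let m₁, m₂ be positive integers and set m = max{m₁, m₂}. If 𝔑(q,n)/m + φ(qⁿ−1) > qⁿ + 1, then (q,n) ∈ B(m₁,m₂). -/
open Polynomial

/-! A rational function `f = f₁/f₂ ∈ Υ(m₁, m₂)` is non-constant and its reduced numerator and
denominator have degree at most `m = max m₁ m₂`, so away from its poles it takes each value at most
`m` times. Hence at most `m (1 + qⁿ - φ(qⁿ - 1))` elements `α` are poles of `f` or have `f(α)`
non-primitive, and the hypothesis says exactly that `𝔑(q, n)` exceeds this bound. The count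
`𝔑(q, n)` does not depend on the chosen fields, since any two extensions `F_{qⁿ}/F_q` are isomorphic
compatibly with an isomorphism of the base fields. -/

theorem IsPrimitiveElem.ne_zero_s17 {L : Type} [Field L] [Fintype L] {α : L}
    (h : IsPrimitiveElem α) : α ≠ 0 := by
  rintro rfl
  have hcard : 2 ≤ Fintype.card L := Fintype.one_lt_card
  have hpow := pow_orderOf_eq_one (0 : L)
  rw [h, zero_pow (by omega)] at hpow
  exact zero_ne_one hpow

theorem isPrimitiveElem_coe_iff {L : Type} [Field L] [Fintype L] (u : Lˣ) :
    IsPrimitiveElem (u : L) ↔ orderOf u = Fintype.card L - 1 := by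
  rw [IsPrimitiveElem, orderOf_units]

def isPrimitiveElemEquivUnits (L : Type) [Field L] [Fintype L] :
    {α : L // IsPrimitiveElem α} ≃ {u : Lˣ // orderOf u = Fintype.card L - 1} where
  toFun α := ⟨Units.mk0 α α.2.ne_zero_s17, (isPrimitiveElem_coe_iff _).1 α.2⟩
  invFun u := ⟨u.1, (isPrimitiveElem_coe_iff _).2 u.2⟩
  left_inv _ := rfl
  right_inv _ := Subtype.ext (Units.ext rfl)

open Finset in
theorem card_filter_isPrimitiveElem (L : Type) [Field L] [Fintype L]
    [DecidablePred (IsPrimitiveElem (L := L))] :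
    #{α : L | IsPrimitiveElem α} = Nat.totient (Fintype.card L - 1) := by
  classical
  rw [← IsCyclic.card_orderOf_eq_totient (α := Lˣ) (by rw [Fintype.card_units]),
    ← Fintype.card_subtype, ← Fintype.card_subtype]
  exact Fintype.card_congr (isPrimitiveElemEquivUnits L)

theorem IsPrimitiveElem.map {L L' : Type} [Field L] [Field L'] [Fintype L] [Fintype L']
    (σ : L ≃+* L') {α : L} (h : IsPrimitiveElem α) : IsPrimitiveElem (σ α) := by
  rw [IsPrimitiveElem, ← Fintype.card_congr σ.toEquiv, ← h]
  exact MulEquiv.orderOf_eq σ.toMulEquiv α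

theorem ratEval_eq {F : Type} [Field F] (f : RatFunc F) (α : F) :
    ratEval f α = f.num.eval α / f.denom.eval α := rfl

theorem RatFunc.num_sub_C_mul_denom_ne_zero {F : Type} [Field F] {f : RatFunc F} {β : F}
    (hf : f ≠ RatFunc.C β) : f.num - Polynomial.C β * f.denom ≠ 0 := by
  intro h
  apply hf
  rw [← RatFunc.num_div_denom f, sub_eq_zero.mp h, map_mul, RatFunc.algebraMap_C,
    mul_div_cancel_right₀ _ (RatFunc.algebraMap_ne_zero f.denom_ne_zero)]

open Finset in
theorem card_filter_ratEval_mem_le {F : Type} [Field F] [Fintype F] [DecidableEq F]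
    {f : RatFunc F} (hf : ∀ β, f ≠ RatFunc.C β) {m : ℕ} (hnum : f.num.natDegree ≤ m)
    (hdenom : f.denom.natDegree ≤ m) (B : Finset F) :
    #{α | ratEval f α ∈ B} ≤ m * (1 + #B) := by
  have hroots : ∀ p : F[X], p.natDegree ≤ m → #p.roots.toFinset ≤ m := fun p hp =>
    (Multiset.toFinset_card_le _).trans ((card_roots' p).trans hp)
  have hfiber : ∀ β, (f.num - C β * f.denom).natDegree ≤ m := fun β =>
    (natDegree_sub_le _ _).trans (max_le hnum ((natDegree_C_mul_le _ _).trans hdenom))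
  -- `ratEval f α` has the junk value `0` at the poles of `f`, so these are counted separately.
  have hsub : ({α | ratEval f α ∈ B} : Finset F) ⊆
      f.denom.roots.toFinset ∪ B.biUnion fun β => (f.num - C β * f.denom).roots.toFinset := by
    intro α hα
    rw [mem_filter] at hα
    by_cases hden : f.denom.eval α = 0
    · exact mem_union_left _ (by simp [f.denom_ne_zero, hden])
    · refine mem_union_right _ (mem_biUnion.2 ⟨_, hα.2, ?_⟩)
      simp [RatFunc.num_sub_C_mul_denom_ne_zero (hf _), ratEval_eq, div_mul_cancel₀ _ hden]
  calc #{α | ratEval f α ∈ B}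
      ≤ #f.denom.roots.toFinset + #(B.biUnion fun β => (f.num - C β * f.denom).roots.toFinset) :=
        (card_le_card hsub).trans (card_union_le _ _)
    _ ≤ m + ∑ _ ∈ B, m := add_le_add (hroots _ hdenom)
        (card_biUnion_le.trans (sum_le_sum fun β _ => hroots _ (hfiber β)))
    _ = m * (1 + #B) := by rw [sum_const, smul_eq_mul]; ring

theorem div_ne_C_of_isCoprime {F : Type} [Field F] {f₁ f₂ : F[X]} (hcop : IsCoprime f₁ f₂)
    (hne : f₁ * f₂ ≠ 0) (hunit : ¬IsUnit (f₁ * f₂)) (β : F) :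
    algebraMap F[X] (RatFunc F) f₁ / algebraMap F[X] (RatFunc F) f₂ ≠ RatFunc.C β := by
  intro h
  have hf₂ : f₂ ≠ 0 := right_ne_zero_of_mul hne
  rw [div_eq_iff (RatFunc.algebraMap_ne_zero hf₂), ← RatFunc.algebraMap_C, ← map_mul] at h
  have hf₁ : f₁ = C β * f₂ := RatFunc.algebraMap_injective F h
  have hβ : β ≠ 0 := by
    rintro rfl
    simp [hf₁] at hne
  have hf₂u : IsUnit f₂ := hcop.isUnit_of_dvd' (hf₁ ▸ dvd_mul_left _ _) dvd_rfl
  exact hunit ((hf₁ ▸ (isUnit_C.2 hβ.isUnit).mul hf₂u).mul hf₂u)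

section Upsilon

variable {F : Type} [Field F] [Fintype F] {m₁ m₂ : ℕ} {f : RatFunc F}

theorem Upsilon.ne_C (hf : f ∈ Upsilon F m₁ m₂) (β : F) : f ≠ RatFunc.C β := by
  obtain ⟨f₁, f₂, -, rfl, -, -, hcop, k, g, hk, -, hg, -, -, hdvd, hndvd⟩ := hf
  refine div_ne_C_of_isCoprime hcop (fun h => hndvd (h ▸ dvd_zero _)) (fun hu => ?_) β
  exact hg.not_isUnit (isUnit_of_dvd_unit ((dvd_pow_self g hk.ne').trans hdvd) hu)

theorem Upsilon.natDegree_num_le (hf : f ∈ Upsilon F m₁ m₂) : f.num.natDegree ≤ m₁ := by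
  obtain ⟨f₁, f₂, hf₂, rfl, hf₁, -, -, _, _, -, -, -, -, -, -, hndvd⟩ := hf
  have hf₁0 : f₁ ≠ 0 := by rintro rfl; simp at hndvd
  exact (natDegree_le_of_dvd ((RatFunc.num_dvd hf₁0).2 ⟨f₂, hf₂, rfl⟩) hf₁0).trans hf₁

theorem Upsilon.natDegree_denom_le (hf : f ∈ Upsilon F m₁ m₂) : f.denom.natDegree ≤ m₂ := by
  obtain ⟨f₁, f₂, hf₂, rfl, -, hf₂m, -⟩ := hf
  exact (natDegree_le_of_dvd ((RatFunc.denom_dvd hf₂).2 ⟨f₁, rfl⟩) hf₂).trans hf₂m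

end Upsilon

section Transfer

variable {K L K' L' : Type} [Field K] [Field L] [Field K'] [Field L']
  [Fintype K] [Fintype K'] [Algebra K L] [Algebra K' L']

theorem IsNormalElem.map (σ : L ≃+* L') (τ : K ≃+* K')
    (hστ : ∀ a, σ (algebraMap K L a) = algebraMap K' L' (τ a)) {n : ℕ} {β : L}
    (h : IsNormalElem K n β) : IsNormalElem K' n (σ β) := by
  have hcard : Fintype.card K = Fintype.card K' := Fintype.card_congr τ.toEquiv
  have hsmul : ∀ (a : K) (x : L), σ (a • x) = τ a • σ x := fun a x => by
    rw [Algebra.smul_def, map_mul, hστ, ← Algebra.smul_def]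
  let σₛ : L →ₛₗ[(τ : K →+* K')] L' := { σ.toAddEquiv.toAddMonoidHom with map_smul' := hsmul }
  have hfamily : (fun i : Fin n => σ β ^ Fintype.card K' ^ (i : ℕ))
      = σ ∘ fun i : Fin n => β ^ Fintype.card K ^ (i : ℕ) := by
    ext i; simp [hcard]
  obtain ⟨hli, hspan⟩ := h
  refine ⟨?_, ?_⟩
  · rw [hfamily]
    refine hli.map_of_injective_injectiveₛ τ.symm σ.toAddEquiv.toAddMonoidHom
      τ.symm.injective σ.injective fun r x => ?_
    simp [hsmul]
  · rw [hfamily, Set.range_comp]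
    change Submodule.span K' (σₛ '' _) = ⊤
    rw [Submodule.span_image, hspan, Submodule.map_top, LinearMap.range_eq_top]
    exact σ.surjective

variable [Fintype L] [Fintype L']

theorem exists_ringEquiv_comp_algebraMap (hK : Fintype.card K = Fintype.card K')
    (hL : Fintype.card L = Fintype.card L') :
    ∃ (τ : K ≃+* K') (σ : L ≃+* L'), ∀ a, σ (algebraMap K L a) = algebraMap K' L' (τ a) := by
  let τ := FiniteField.ringEquivOfCardEq hK
  -- Through `τ`, both `L` and `L'` are splitting fields of `X ^ |L| - X` over `K`.
  let _ : Algebra K L' := ((algebraMap K' L').comp τ.toRingHom).toAlgebra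
  have : IsSplittingField K L' (X ^ Fintype.card L - X) :=
    hL ▸ FiniteField.isSplittingField_sub L' K
  let e : L ≃ₐ[K] L' := (IsSplittingField.algEquiv L (X ^ Fintype.card L - X)).trans
    (IsSplittingField.algEquiv L' (X ^ Fintype.card L - X)).symm
  exact ⟨τ, e.toRingEquiv, e.commutes⟩

theorem NNum_le_of_card_eq (hK : Fintype.card K = Fintype.card K')
    (hL : Fintype.card L = Fintype.card L') (n : ℕ) : NNum K L n ≤ NNum K' L' n := by
  obtain ⟨τ, σ, hστ⟩ := exists_ringEquiv_comp_algebraMap hK hL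
  exact Nat.card_le_card_of_injective (fun α => ⟨σ α, α.2.1.map σ, α.2.2.map σ τ hστ⟩)
    fun α β h => Subtype.ext (σ.injective (congrArg Subtype.val h))

end Transfer

open Finset in
theorem exists_isPrimitiveElem_isNormalElem_ratEval_isPrimitiveElem (K L : Type) [Field K]
    [Field L] [Fintype K] [Fintype L] [Algebra K L] (n : ℕ) {m₁ m₂ : ℕ} {f : RatFunc L}
    (hf : f ∈ Upsilon L m₁ m₂)
    (hN : max m₁ m₂ * (Fintype.card L + 1)
      < NNum K L n + max m₁ m₂ * Nat.totient (Fintype.card L - 1)) :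
    ∃ α : L, IsPrimitiveElem α ∧ IsNormalElem K n α ∧ IsPrimitiveElem (ratEval f α) := by
  classical
  set S : Finset L := {α | IsPrimitiveElem α ∧ IsNormalElem K n α}
  set B : Finset L := {β | ¬IsPrimitiveElem β}
  have hS : #S = NNum K L n := by
    simp [S, NNum, Nat.card_eq_fintype_card, Fintype.card_subtype]
  have hB : #B + Nat.totient (Fintype.card L - 1) = Fintype.card L := by
    rw [← card_filter_isPrimitiveElem, add_comm]
    exact card_filter_add_card_filter_not _
  have hbad := card_filter_ratEval_mem_le (Upsilon.ne_C hf)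
    ((Upsilon.natDegree_num_le hf).trans (le_max_left _ _))
    ((Upsilon.natDegree_denom_le hf).trans (le_max_right _ _)) B
  have hsplit : max m₁ m₂ * (Fintype.card L + 1)
      = max m₁ m₂ * (1 + #B) + max m₁ m₂ * Nat.totient (Fintype.card L - 1) := by
    conv_lhs => rw [← hB]
    ring
  obtain ⟨α, hαS, hαbad⟩ :=
    exists_mem_notMem_of_card_lt_card (s := {α | ratEval f α ∈ B}) (t := S) (by omega)
  simp only [S, B, mem_filter, mem_univ, true_and, not_not] at hαS hαbad
  exact ⟨α, hαS.1, hαS.2, hαbad⟩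

theorem stmt17_general (q n m₁ m₂ : ℕ)
    (hm₁ : 0 < m₁)
    (K L : Type) [Field K] [Field L] [Fintype K] [Fintype L] [Algebra K L]
    (hK : Fintype.card K = q) (hL : Fintype.card L = q ^ n)
    (h : (NNum K L n : ℝ) / (max m₁ m₂ : ℝ) + (Nat.totient (q ^ n - 1) : ℝ)
      > (q : ℝ) ^ n + 1) :
    memB m₁ m₂ q n := by
  intro K' L' _ _ _ _ _ hK' hL' f hf
  refine exists_isPrimitiveElem_isNormalElem_ratEval_isPrimitiveElem K' L' n hf ?_
  have hNN : (NNum K L n : ℝ) ≤ NNum K' L' n := by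
    exact_mod_cast NNum_le_of_card_eq (hK.trans hK'.symm) (hL.trans hL'.symm) n
  have hm : (0 : ℝ) < max (m₁ : ℝ) m₂ := lt_max_of_lt_left (by exact_mod_cast hm₁)
  rw [gt_iff_lt, ← sub_lt_iff_lt_add, lt_div_iff₀ hm] at h
  rw [hL']
  exact_mod_cast (show ((max m₁ m₂ : ℕ) : ℝ) * ((q : ℝ) ^ n + 1) <
    NNum K' L' n + ((max m₁ m₂ : ℕ) : ℝ) * (Nat.totient (q ^ n - 1)) by push_cast; linarith)

theorem stmt17 (k q n m₁ m₂ : ℕ) (hk : 0 < k) (hqk : q = 2 ^ k) (hn : 3 ≤ n)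
    (hm₁ : 0 < m₁) (hm₂ : 0 < m₂)
    (K L : Type) [Field K] [Field L] [Fintype K] [Fintype L] [Algebra K L]
    (hK : Fintype.card K = q) (hL : Fintype.card L = q ^ n)
    (h : (NNum K L n : ℝ) / (max m₁ m₂ : ℝ) + (Nat.totient (q ^ n - 1) : ℝ)
      > (q : ℝ) ^ n + 1) :
    memB m₁ m₂ q n :=
  stmt17_general q n m₁ m₂ hm₁ K L hK hL h
end
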